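/- Fix a prime p > 3 and a positive integer n ≥ 2, and write the base-p expansion of n as n = Σ_{i=1}^{k} a_i p^{b_i}, where 0 < a_i ≤ p-1 for each i and 0 ≤ b_1 < b_2 < ... < b_k. Suppose in addition that a_i = 1 for all i. Then Π_{i=1}^{k} p^{b_i} ≤ (1/2) · ((p-1)!)^((n-1)/(p-2)), where the right-hand side is a real number with real exponent (n-1)/(p-2). -/

import Mathlib

/-!
Since every digit is `1`, `n = ∑ p ^ bᵢ`, and Bernoulli's inequality `p ^ b ≥ (p - 1) b + 1`
gives `n ≥ (p - 1) S + k` for `S = ∑ bᵢ`, hence `n ≥ (p - 2) S + 2` (if `S = 0` this is `n ≥ 2`).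
As `(p - 1)!` dominates both `2 ^ (p - 2)` and `p`, this yields
`(2 p ^ S) ^ (p - 2) ≤ ((p - 1)!) ^ (n - 1)`; take `(p - 2)`-th roots.
-/

open Finset Nat

lemma sub_one_mul_sum_add_card_le_sum_pow {ι : Type*} (s : Finset ι) (b : ι → ℕ) {p : ℕ}
    (hp : 1 ≤ p) : (p - 1) * ∑ i ∈ s, b i + #s ≤ ∑ i ∈ s, p ^ b i := by
  rw [mul_sum, card_eq_sum_ones, ← sum_add_distrib]
  refine sum_le_sum fun i _ => ?_
  have bernoulli := one_add_le_pow_of_two_add_nonneg (a := p - 1) (zero_le _) (b i)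
  rwa [Nat.add_sub_cancel' hp, add_comm, mul_comm] at bernoulli

lemma sub_two_mul_sum_add_two_le_sum_pow {ι : Type*} (s : Finset ι) (b : ι → ℕ) {p : ℕ}
    (hp : 2 ≤ p) (h : 2 ≤ ∑ i ∈ s, p ^ b i) : (p - 2) * ∑ i ∈ s, b i + 2 ≤ ∑ i ∈ s, p ^ b i := by
  have hbound := sub_one_mul_sum_add_card_le_sum_pow s b (p := p) (by omega)
  set S := ∑ i ∈ s, b i
  rcases Nat.eq_zero_or_pos S with hS | hS
  · simpa [hS] using h
  have hs : 1 ≤ #s := card_pos.mpr (nonempty_of_sum_ne_zero hS.ne')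
  have hsplit : (p - 1) * S = (p - 2) * S + S := by
    rw [show p - 1 = p - 2 + 1 by omega, add_one_mul]
  omega

lemma le_factorial_sub_one {p : ℕ} (hp : 4 ≤ p) : p ≤ (p - 1)! := by
  obtain ⟨i, rfl⟩ := Nat.exists_eq_add_of_le' hp
  have := add_factorial_le_factorial_add i (n := 3) (by norm_num)
  simp only [show (3 : ℕ)! = 6 by rfl] at this
  rw [show i + 4 - 1 = i + 3 by omega]
  omega

lemma two_pow_sub_two_le_factorial_sub_one {p : ℕ} (hp : 2 ≤ p) : 2 ^ (p - 2) ≤ (p - 1)! := by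
  simpa [show 1 + (p - 2) = p - 1 by omega] using factorial_mul_pow_le_factorial (m := 1) (n := p - 2)

lemma two_mul_pow_pow_le_factorial_pow {p S m : ℕ} (hp : 4 ≤ p) (hm : (p - 2) * S + 1 ≤ m) :
    (2 * p ^ S) ^ (p - 2) ≤ (p - 1)! ^ m :=
  calc (2 * p ^ S) ^ (p - 2) = 2 ^ (p - 2) * p ^ ((p - 2) * S) := by
        rw [mul_pow, ← pow_mul, mul_comm S]
    _ ≤ (p - 1)! * (p - 1)! ^ ((p - 2) * S) := by
        gcongr
        · exact two_pow_sub_two_le_factorial_sub_one (by omega)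
        · exact le_factorial_sub_one hp
    _ = (p - 1)! ^ ((p - 2) * S + 1) := by rw [pow_succ']
    _ ≤ (p - 1)! ^ m := Nat.pow_le_pow_right (factorial_pos _) hm

lemma Real.le_rpow_div_of_pow_le {x y : ℝ} (hx : 0 ≤ x) (hy : 0 ≤ y) {m d : ℕ} (hd : d ≠ 0)
    (h : x ^ d ≤ y ^ m) : x ≤ y ^ ((m : ℝ) / d) :=
  calc x = (x ^ d) ^ (d⁻¹ : ℝ) := (Real.pow_rpow_inv_natCast hx hd).symm
    _ ≤ (y ^ m) ^ (d⁻¹ : ℝ) := Real.rpow_le_rpow (by positivity) h (by positivity)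
    _ = y ^ ((m : ℝ) / d) := by rw [← Real.rpow_natCast, ← Real.rpow_mul hy, div_eq_mul_inv]

theorem base_p_centralizer_bound_all_digits_one_general
    (p n k : ℕ) (a b : ℕ → ℕ) (hp3 : 3 < p) (hn : 2 ≤ n)
    (hsum : n = ∑ i ∈ Finset.range k, a i * p ^ b i)
    (hone : ∀ i < k, a i = 1) :
    ((∏ i ∈ Finset.range k, p ^ b i : ℕ) : ℝ) ≤
      (1 / 2) * ((Nat.factorial (p - 1) : ℝ)) ^ (((n : ℝ) - 1) / ((p : ℝ) - 2)) := by
  have hdigits : n = ∑ i ∈ range k, p ^ b i := hsum.trans <|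
    sum_congr rfl fun i hi => by rw [hone i (mem_range.mp hi), one_mul]
  have hexp : (p - 2) * ∑ i ∈ range k, b i + 1 ≤ n - 1 := by
    have := sub_two_mul_sum_add_two_le_sum_pow (range k) b (p := p) (by omega) (hdigits ▸ hn)
    omega
  have key := Real.le_rpow_div_of_pow_le (x := 2 * (p : ℝ) ^ ∑ i ∈ range k, b i)
    (y := ((p - 1)! : ℝ)) (by positivity) (by positivity) (by omega : p - 2 ≠ 0)
    (by exact_mod_cast two_mul_pow_pow_le_factorial_pow (by omega) hexp)
  rw [prod_pow_eq_pow_sum]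
  push_cast [Nat.cast_sub (by omega : 1 ≤ n), Nat.cast_sub (by omega : 2 ≤ p)] at key ⊢
  linarith

/-- Lemma 6.1 (second part): fix a prime `p > 3` and `n ≥ 2` with base-`p` expansion
`n = Σ_{i<k} a i * p ^ b i` in which every nonzero digit `a i` equals `1`.  Then
`Π_{i<k} p ^ (b i) ≤ (1/2) * ((p-1)!) ^ ((n-1)/(p-2))`, a real power. -/
theorem base_p_centralizer_bound_all_digits_one
    (p n k : ℕ) (a b : ℕ → ℕ) (hp : p.Prime) (hp3 : 3 < p) (hn : 2 ≤ n)
    (ha : ∀ i < k, 0 < a i ∧ a i ≤ p - 1)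
    (hb : ∀ i j, i < j → j < k → b i < b j)
    (hsum : n = ∑ i ∈ Finset.range k, a i * p ^ b i)
    (hone : ∀ i < k, a i = 1) :
    ((∏ i ∈ Finset.range k, p ^ b i : ℕ) : ℝ) ≤
      (1 / 2) * ((Nat.factorial (p - 1) : ℝ)) ^ (((n : ℝ) - 1) / ((p : ℝ) - 2)) :=
  base_p_centralizer_bound_all_digits_one_general p n k a b hp3 hn hsum hone
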